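/- An integral domain R is completely integrally closed and w-stable if and only if R is a Krull domain; equivalently, R is completely integrally closed and w-divisorial (w = v) if and only if R is a Krull domain. -/

import Mathlib

noncomputable section

section Defs

variable (R K : Type*) [CommRing R] [CommRing K] [Algebra R K]

/-- The residual `(E : F) = {x ∈ K : xF ⊆ E}` of two `R`-submodules of `K`. -/
def resid (E F : Submodule R K) : Submodule R K where
  carrier := {x : K | ∀ y ∈ F, x * y ∈ E}
  add_mem' := by
    intro a b ha hb y hy
    simpa only [Set.mem_setOf_eq, add_mul] using E.add_mem (ha y hy) (hb y hy)
  zero_mem' := by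
    intro y hy
    simp
  smul_mem' := by
    intro c x hx y hy
    simpa [smul_mul_assoc] using E.smul_mem c (hx y hy)

/-- The image of an ideal of `R` as an `R`-submodule of `K`. -/
def idealToSub (I : Ideal R) : Submodule R K :=
  Submodule.map (Algebra.linearMap R K) I

end Defs

/-- A semistar operation on an integral domain `R` with quotient field `K`. -/
structure SemistarOp (R K : Type*) [CommRing R] [Field K] [Algebra R K] where
  star : Submodule R K → Submodule R K
  star_smul : ∀ x : K, x ≠ 0 → ∀ E : Submodule R K, E ≠ ⊥ →
    star (Submodule.span R {x} * E) = Submodule.span R {x} * star E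
  mono : ∀ E F : Submodule R K, E ≠ ⊥ → E ≤ F → star E ≤ star F
  le_star : ∀ E : Submodule R K, E ≠ ⊥ → E ≤ star E
  idem : ∀ E : Submodule R K, E ≠ ⊥ → star (star E) = star E

section Ops

variable (R K : Type*) [CommRing R] [Field K] [Algebra R K]

/-- The `v`-operation (divisorial closure) `E ↦ (R : (R : E))`. -/
def vop (E : Submodule R K) : Submodule R K := resid R K 1 (resid R K 1 E)

/-- The `t`-operation, the finite-type version of `v`. -/
def top (E : Submodule R K) : Submodule R K :=
  ⨆ (F : Submodule R K) (_ : F.FG ∧ F ≠ ⊥ ∧ F ≤ E), vop R K F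

/-- The `w`-operation `E ↦ ⋃ {(E : F) : F f.g. nonzero with F^t = R}`. -/
def wop (E : Submodule R K) : Submodule R K :=
  ⨆ (F : Submodule R K) (_ : F.FG ∧ F ≠ ⊥ ∧ top R K F = 1), resid R K E F

/-- `M` is a maximal proper `f`-closed ideal (e.g. a `⋆`-maximal ideal). -/
def IsOpMaxIdeal (f : Submodule R K → Submodule R K) (M : Submodule R K) : Prop :=
  M ≠ ⊥ ∧ M < 1 ∧ f M = M ∧
    ∀ J : Submodule R K, J ≠ ⊥ → J < 1 → f J = J → M ≤ J → M = J

/-- The localization `E R_P` of a submodule `E` at a prime `P`, inside `K`. -/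
def locSub (P : Ideal R) (E : Submodule R K) : Submodule R K :=
  Submodule.span R {x : K | ∃ s : R, s ∉ P ∧ s • x ∈ E}

/-- The subring of `K` determined by the submodule `T` is a stable domain:
every nonzero ideal `E` of `T` is invertible in `(E : E)`. -/
def SubringStable (T : Submodule R K) : Prop :=
  ∀ E : Submodule R K, E ≠ ⊥ → E ≤ T → T * E ≤ E →
    E * resid R K (resid R K E E) E = resid R K E E

/-- The subring of `K` determined by `T` is a divisorial domain: every nonzero
fractional ideal of `T` is divisorial. -/
def SubringDivisorial (T : Submodule R K) : Prop :=
  ∀ J : Submodule R K, J ≠ ⊥ → T * J ≤ J →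
    (∃ x : K, x ≠ 0 ∧ ∀ y ∈ J, x * y ∈ T) →
    resid R K T (resid R K T J) = J

/-- The subring of `K` determined by `T` is `v`-coherent: for every nonzero
finitely generated ideal `I = S·T` of `T`, the ideal `(T : I)` is `v`-finite. -/
def SubringVCoherent (T : Submodule R K) : Prop :=
  ∀ S : Submodule R K, S.FG → S ≠ ⊥ → S ≤ T →
    ∃ H : Submodule R K, H.FG ∧ H ≠ ⊥ ∧
      resid R K T (S * T) = resid R K T (resid R K T (H * T))

/-- `R` has finite character with respect to the maximal ideals singled out by `f`. -/
def OpFiniteCharacter (f : Submodule R K → Submodule R K) : Prop :=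
  ∀ I : Submodule R K, I ≠ ⊥ → I ≤ 1 →
    {M : Submodule R K | IsOpMaxIdeal R K f M ∧ I ≤ M}.Finite

/-- Every nonzero finitely generated ideal is `t`-invertible (PvMD). -/
def IsPvMDsub : Prop :=
  ∀ G : Submodule R K, G.FG → G ≠ ⊥ → G ≤ 1 →
    top R K (G * resid R K 1 G) = 1

end Ops

namespace SemistarOp

variable {R K : Type*} [CommRing R] [Field K] [Algebra R K] (s : SemistarOp R K)

/-- `⋆`-stability for the ideals of the subring determined by `T`. -/
def StarStableOver (T : Submodule R K) : Prop :=
  ∀ E : Submodule R K, E ≠ ⊥ → E ≤ T → T * E ≤ E →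
    s.star (s.star E * resid R K (resid R K (s.star E) (s.star E)) (s.star E))
      = resid R K (s.star E) (s.star E)

/-- `R` is `⋆`-stable: each nonzero ideal `I` is such that `I^⋆` is
`⋆̇`-invertible in `(I^⋆ : I^⋆)`. -/
def StarStable : Prop := s.StarStableOver (1 : Submodule R K)

/-- `⋆` is of finite type. -/
def FinType : Prop :=
  ∀ E : Submodule R K, E ≠ ⊥ →
    s.star E = ⨆ (F : Submodule R K) (_ : F.FG ∧ F ≠ ⊥ ∧ F ≤ E), s.star F

/-- `⋆ = ⋆̃`: the operation is spectral and of finite type, i.e. it is given by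
`E^⋆ = ⋃ {(E : F) : F f.g. nonzero with F^⋆ = R}`. -/
def IsSpectralFT : Prop :=
  ∀ E : Submodule R K, E ≠ ⊥ →
    s.star E = ⨆ (F : Submodule R K) (_ : F.FG ∧ F ≠ ⊥ ∧ s.star F = 1), resid R K E F

/-- The `⋆`-integral closure `R^{[⋆]} = ⋃ {(F^⋆ : F^⋆) : F f.g. nonzero}`. -/
def starIntClosure : Submodule R K :=
  ⨆ (F : Submodule R K) (_ : F.FG ∧ F ≠ ⊥), resid R K (s.star F) (s.star F)

end SemistarOp


section MoreOps

variable (R K : Type*) [CommRing R] [Field K] [Algebra R K]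

/-- `R` is `w`-stable: for each nonzero ideal `I`, `I^w` is invertible in
`(I^w : I^w)` with respect to the restriction of `w`. -/
def WStable : Prop :=
  ∀ I : Submodule R K, I ≠ ⊥ → I ≤ 1 →
    wop R K (wop R K I * resid R K (resid R K (wop R K I) (wop R K I)) (wop R K I))
      = resid R K (wop R K I) (wop R K I)

/-- `R` is completely integrally closed in its quotient field `K`. -/
def CICsub : Prop :=
  ∀ x : K, (∃ c : R, c ≠ 0 ∧ ∀ n : ℕ, c • x ^ n ∈ (1 : Submodule R K)) →
    x ∈ (1 : Submodule R K)

/-- `R` is `w`-divisorial: `w = v` on nonzero fractional ideals. -/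
def WDivisorial : Prop :=
  ∀ J : Submodule R K, J ≠ ⊥ →
    (∃ d : R, d ≠ 0 ∧ ∀ x ∈ J, d • x ∈ (1 : Submodule R K)) →
    wop R K J = vop R K J

/-- `R` is a Krull domain: completely integrally closed with the ascending chain
condition on (integral) divisorial ideals. -/
def IsKrullSub : Prop :=
  CICsub R K ∧
    ∀ c : ℕ → Submodule R K,
      (∀ n, c n ≠ ⊥ ∧ c n ≤ 1 ∧ vop R K (c n) = c n) → Monotone c →
        ∃ n, ∀ m, n ≤ m → c m = c n

end MoreOps

end


/-!
For a completely integrally closed domain, `(E : E) = R` for every nonzero fractional ideal `E`,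
and hence `(R : I(R : I)) = R`, i.e. `(I(R : I))^v = R`, for every nonzero ideal `I`. So
`w`-stability says exactly that `(I^w(R : I))^w = R`, and `w`-divisoriality gives
`(I(R : I))^w = R`; either way `I^w(R : I)` contains a GV-ideal `F`. Writing `F ⊆ A(R : I)` with
`A ⊆ I^w` finitely generated and `AG ⊆ I` for a GV-ideal `G` shows `I^v = (AG)^v`: every ideal is
`v`-finite, and then the union of a chain of divisorial ideals is the `v`-closure of a finitely
generated ideal contained in one member, so the chain stops. Conversely, under the ACC on
divisorial ideals a finitely generated `F ⊆ I` with `F^v` maximal has `F^v = I^v` (Mori), and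
applied to `I(R : I)` this yields the GV-ideal needed for `w`-stability and `w = v`.
-/

namespace Submodule

section Compact

variable {R M : Type*} [Semiring R] [AddCommMonoid M] [Module R M]

theorem FG.exists_le_of_le_iSup {ι : Sort*} [Nonempty ι] {f : ι → Submodule R M}
    (hf : Directed (· ≤ ·) f) {N : Submodule R M} (hN : N.FG) (h : N ≤ ⨆ i, f i) :
    ∃ i, N ≤ f i := by
  obtain ⟨_, ⟨i, rfl⟩, hi⟩ :=
    (CompleteLattice.isCompactElement_iff_le_of_directed_sSup_le (k := N)).mp
      ((fg_iff_compact N).mp hN) (Set.range f) (Set.range_nonempty f) (directedOn_range.mpr hf) h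
  exact ⟨i, hi⟩

end Compact

variable {R A : Type*} [CommSemiring R] [CommSemiring A] [Algebra R A]

theorem FG.exists_fg_le_of_le_mul {F P Q : Submodule R A} (hF : F.FG) (h : F ≤ P * Q) :
    ∃ P' ≤ P, P'.FG ∧ F ≤ P' * Q := by
  let f : {P' : Submodule R A // P' ≤ P ∧ P'.FG} → Submodule R A := fun P' => P'.1 * Q
  have : Nonempty {P' : Submodule R A // P' ≤ P ∧ P'.FG} := ⟨⟨⊥, bot_le, fg_bot⟩⟩
  have hdir : Directed (· ≤ ·) f := fun P₁ P₂ =>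
    ⟨⟨P₁.1 ⊔ P₂.1, sup_le P₁.2.1 P₂.2.1, P₁.2.2.sup P₂.2.2⟩,
      mul_le_mul_left le_sup_left Q, mul_le_mul_left le_sup_right Q⟩
  have hPQ : P * Q ≤ ⨆ P', f P' := mul_le.mpr fun p hp q hq =>
    le_iSup f ⟨span R {p}, (span_singleton_le_iff_mem p P).mpr hp, fg_span_singleton p⟩
      (mul_mem_mul (mem_span_singleton_self p) hq)
  obtain ⟨⟨P', hP', hfg⟩, hle⟩ := hF.exists_le_of_le_iSup hdir (h.trans hPQ)
  exact ⟨P', hP', hfg, hle⟩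

theorem div_le_div {I I' J J' : Submodule R A} (hI : I ≤ I') (hJ : J' ≤ J) : I / J ≤ I' / J' :=
  fun _ hx y hy => hI (hx y (hJ hy))

theorem div_mul_eq_div_div (I J L : Submodule R A) : I / (J * L) = I / J / L :=
  eq_of_forall_le_iff fun X => by
    rw [le_div_iff_mul_le, le_div_iff_mul_le, le_div_iff_mul_le, mul_assoc, mul_comm L J]

theorem div_one (I : Submodule R A) : I / 1 = I :=
  eq_of_forall_le_iff fun X => by rw [le_div_iff_mul_le, mul_one]

theorem le_one_div_one_div (I : Submodule R A) : I ≤ 1 / (1 / I) :=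
  le_div_iff_mul_le.mpr mul_one_div_le_one

theorem one_div_one_div_one_div (I : Submodule R A) : 1 / (1 / (1 / I)) = 1 / I :=
  le_antisymm (div_le_div le_rfl (le_one_div_one_div I)) (le_one_div_one_div _)

end Submodule

theorem exists_maximal_of_monotone_chain_condition {α : Type*} [PartialOrder α] {P : α → Prop}
    (hacc : ∀ c : ℕ → α, (∀ n, P (c n)) → Monotone c → ∃ n, ∀ m, n ≤ m → c m = c n)
    {s : Set α} (hs : ∀ x ∈ s, P x) (hne : s.Nonempty) : ∃ x, Maximal (· ∈ s) x := by
  have : WellFoundedGT {x // P x} := wellFoundedGT_iff_monotone_chain_condition.mpr fun c => by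
    obtain ⟨n, hn⟩ := hacc (fun n => (c n).1) (fun n => (c n).2) fun _ _ h => c.mono h
    exact ⟨n, fun m hm => Subtype.ext (hn m hm).symm⟩
  obtain ⟨x, hx⟩ := hne
  obtain ⟨⟨x, _⟩, hxs, hmax⟩ :=
    wellFounded_gt.has_min {x : {x // P x} | x.1 ∈ s} ⟨⟨x, hs x hx⟩, hx⟩
  exact ⟨x, hxs, fun y hy hxy => (eq_of_le_of_not_lt hxy (hmax ⟨y, hs y hy⟩ hy)).ge⟩

section WOperation

variable {R K : Type*} [CommRing R] [Field K] [Algebra R K]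

theorem resid_eq_div (E F : Submodule R K) : resid R K E F = E / F := rfl

theorem vop_eq_one_div_one_div (E : Submodule R K) : vop R K E = 1 / (1 / E) := rfl

theorem le_vop (E : Submodule R K) : E ≤ vop R K E := Submodule.le_one_div_one_div E

theorem vop_mono {E F : Submodule R K} (h : E ≤ F) : vop R K E ≤ vop R K F :=
  Submodule.div_le_div le_rfl (Submodule.div_le_div le_rfl h)

theorem vop_vop (E : Submodule R K) : vop R K (vop R K E) = vop R K E :=
  congrArg (1 / ·) (Submodule.one_div_one_div_one_div E)

theorem vop_le_one {E : Submodule R K} (h : E ≤ 1) : vop R K E ≤ 1 := by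
  simpa [vop_eq_one_div_one_div, Submodule.div_one] using
    Submodule.div_le_div (le_refl (1 : Submodule R K)) (Submodule.one_le_one_div.mpr h)

theorem top_eq_vop_of_fg {F : Submodule R K} (hfg : F.FG) (hF : F ≠ ⊥) :
    top R K F = vop R K F :=
  le_antisymm (iSup₂_le fun _ hG => vop_mono hG.2.2)
    (le_iSup₂_of_le F ⟨hfg, hF, le_rfl⟩ le_rfl)

theorem vop_eq_one_iff {F : Submodule R K} : vop R K F = 1 ↔ 1 / F = 1 := by
  rw [vop_eq_one_div_one_div]
  refine ⟨fun h => ?_, fun h => by rw [h, Submodule.div_one]⟩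
  rw [← Submodule.one_div_one_div_one_div F, h, Submodule.div_one]

/-- The GV-ideals: for a finitely generated `F`, `F^t = R` iff `(R : F) = R`. -/
def IsGVIdeal (F : Submodule R K) : Prop := F.FG ∧ F ≠ ⊥ ∧ 1 / F = 1

theorem isGVIdeal_iff_top_eq_one {F : Submodule R K} :
    IsGVIdeal F ↔ F.FG ∧ F ≠ ⊥ ∧ top R K F = 1 := by
  refine and_congr_right fun hfg => and_congr_right fun hF => ?_
  rw [top_eq_vop_of_fg hfg hF, vop_eq_one_iff]

theorem isGVIdeal_one : IsGVIdeal (1 : Submodule R K) :=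
  ⟨Submodule.one_eq_span (R := R) (A := K) ▸ Submodule.fg_span_singleton 1, one_ne_zero,
    Submodule.div_one 1⟩

theorem IsGVIdeal.le_one {F : Submodule R K} (hF : IsGVIdeal F) : F ≤ 1 :=
  Submodule.one_mem_div.mp (by rw [hF.2.2]; exact Submodule.one_le.mp le_rfl)

theorem IsGVIdeal.one_div_mul {G : Submodule R K} (hG : IsGVIdeal G) (A : Submodule R K) :
    1 / (A * G) = 1 / A := by
  rw [mul_comm, Submodule.div_mul_eq_div_div, hG.2.2]

theorem IsGVIdeal.mul {F G : Submodule R K} (hF : IsGVIdeal F) (hG : IsGVIdeal G) :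
    IsGVIdeal (F * G) :=
  ⟨hF.1.mul hG.1, mul_ne_zero hF.2.1 hG.2.1, by rw [hG.one_div_mul, hF.2.2]⟩

theorem wop_eq_iSup (E : Submodule R K) :
    wop R K E = ⨆ G : {G : Submodule R K // IsGVIdeal G}, E / G.1 := by
  simp_rw [wop, ← isGVIdeal_iff_top_eq_one, resid_eq_div]
  exact iSup_subtype'

theorem directed_div_isGVIdeal (E : Submodule R K) :
    Directed (· ≤ ·) fun G : {G : Submodule R K // IsGVIdeal G} => E / G.1 := fun G G' =>
  ⟨⟨G.1 * G'.1, G.2.mul G'.2⟩,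
    Submodule.div_le_div le_rfl (mul_le_of_le_one_right' G'.2.le_one),
    Submodule.div_le_div le_rfl (mul_le_of_le_one_left' G.2.le_one)⟩

theorem exists_isGVIdeal_mul_le_of_fg_le_wop {A E : Submodule R K} (hA : A.FG)
    (h : A ≤ wop R K E) : ∃ G, IsGVIdeal G ∧ A * G ≤ E := by
  have : Nonempty {G : Submodule R K // IsGVIdeal G} := ⟨⟨1, isGVIdeal_one⟩⟩
  obtain ⟨G, hG⟩ := hA.exists_le_of_le_iSup (directed_div_isGVIdeal E) (wop_eq_iSup E ▸ h)
  exact ⟨G.1, G.2, Submodule.le_div_iff_mul_le.mp hG⟩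

theorem le_wop (E : Submodule R K) : E ≤ wop R K E := by
  rw [wop_eq_iSup]
  exact le_iSup_of_le ⟨1, isGVIdeal_one⟩ (Submodule.div_one E).ge

theorem one_le_wop_iff {E : Submodule R K} : 1 ≤ wop R K E ↔ ∃ G, IsGVIdeal G ∧ G ≤ E := by
  refine ⟨fun h => ?_, fun ⟨G, hG, hGE⟩ => ?_⟩
  · simpa using exists_isGVIdeal_mul_le_of_fg_le_wop isGVIdeal_one.1 h
  · rw [wop_eq_iSup]
    exact le_iSup_of_le ⟨G, hG⟩ (Submodule.one_le.mpr (Submodule.one_mem_div.mpr hGE))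

theorem wop_mono {E F : Submodule R K} (h : E ≤ F) : wop R K E ≤ wop R K F := by
  simp only [wop_eq_iSup]
  exact iSup_mono fun G => Submodule.div_le_div h le_rfl

theorem wop_le_vop (E : Submodule R K) : wop R K E ≤ vop R K E := by
  rw [wop_eq_iSup]
  refine iSup_le fun G => Submodule.le_div_iff_mul_le.mpr ?_
  refine (Submodule.le_div_iff_mul_le.mpr ?_).trans G.2.2.2.le
  calc E / G.1 * (1 / E) * G.1 = E / G.1 * G.1 * (1 / E) := mul_right_comm _ _ _
    _ ≤ E * (1 / E) := mul_le_mul_left (Submodule.le_div_iff_mul_le.mp le_rfl) _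
    _ ≤ 1 := Submodule.mul_one_div_le_one

theorem wop_one : wop R K (1 : Submodule R K) = 1 := by
  refine le_antisymm ?_ (le_wop 1)
  rw [wop_eq_iSup]
  exact iSup_le fun G => G.2.2.2.le

theorem wop_le_one {E : Submodule R K} (h : E ≤ 1) : wop R K E ≤ 1 :=
  (wop_mono h).trans wop_one.le

theorem one_div_wop (E : Submodule R K) : 1 / wop R K E = 1 / E :=
  le_antisymm (Submodule.div_le_div le_rfl (le_wop E)) <|
    calc 1 / E = 1 / vop R K E := (Submodule.one_div_one_div_one_div E).symm
      _ ≤ 1 / wop R K E := Submodule.div_le_div le_rfl (wop_le_vop E)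

theorem CICsub.div_self (hc : CICsub R K) {E : Submodule R K} (hE : E ≠ ⊥) {a : K} (ha0 : a ≠ 0)
    (ha : a ∈ 1 / E) : E / E = 1 := by
  refine le_antisymm (fun x hx => hc x ?_)
    (Submodule.one_le.mpr (Submodule.one_mem_div.mpr le_rfl))
  obtain ⟨e, he, he0⟩ := Submodule.exists_mem_ne_zero_of_ne_bot hE
  obtain ⟨c, hce⟩ := Submodule.mem_one.mp (ha e he)
  refine ⟨c, fun h => mul_ne_zero ha0 he0 (by rw [← hce, h, map_zero]), fun n => ?_⟩
  have hxn : x ^ n * e ∈ E := by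
    induction n with
    | zero => simpa using he
    | succ n ih => simpa [pow_succ, mul_comm, mul_left_comm] using hx _ ih
  rw [Algebra.smul_def, hce, mul_assoc, mul_comm e]
  exact ha _ hxn

theorem CICsub.one_div_mul_one_div_self (hc : CICsub R K) {E : Submodule R K} (hE : E ≠ ⊥) {a : K}
    (ha0 : a ≠ 0) (ha : a ∈ 1 / E) : 1 / (E * (1 / E)) = 1 := by
  obtain ⟨e, he, he0⟩ := Submodule.exists_mem_ne_zero_of_ne_bot hE
  rw [Submodule.div_mul_eq_div_div]
  exact hc.div_self (Submodule.ne_bot_iff _ |>.mpr ⟨a, ha, ha0⟩) he0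
    (Submodule.le_one_div_one_div E he)

def IsVFinite (U : Submodule R K) : Prop :=
  ∃ B ≤ U, B.FG ∧ B ≠ ⊥ ∧ vop R K B = vop R K U

theorem isVFinite_of_one_le_wop {U : Submodule R K} (h : 1 ≤ wop R K (wop R K U * (1 / U))) :
    IsVFinite U := by
  obtain ⟨F, hF, hFle⟩ := one_le_wop_iff.mp h
  obtain ⟨A, hA, hAfg, hFA⟩ := hF.1.exists_fg_le_of_le_mul hFle
  obtain ⟨G, hG, hAG⟩ := exists_isGVIdeal_mul_le_of_fg_le_wop hAfg hA
  have hAne : A ≠ ⊥ := by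
    rintro rfl
    exact hF.2.1 (le_bot_iff.mp (by simpa using hFA))
  have hUA : U * (1 / A) ≤ 1 := by
    have : 1 / A * U ≤ 1 / F := Submodule.le_div_iff_mul_le.mpr <| calc
      1 / A * U * F ≤ 1 / A * U * (A * (1 / U)) := by gcongr
      _ = A * (1 / A) * (U * (1 / U)) := by ring
      _ ≤ 1 * 1 := mul_le_mul' Submodule.mul_one_div_le_one Submodule.mul_one_div_le_one
      _ = 1 := one_mul 1
    rwa [hF.2.2, mul_comm] at this
  refine ⟨A * G, hAG, hAfg.mul hG.1, mul_ne_zero hAne hG.2.1, le_antisymm (vop_mono hAG) ?_⟩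
  rw [vop_eq_one_div_one_div (A * G), hG.one_div_mul, ← vop_eq_one_div_one_div, ← vop_vop A]
  exact vop_mono (Submodule.le_div_iff_mul_le.mpr hUA)

theorem IsKrullSub.isVFinite (hk : IsKrullSub R K) {A : Submodule R K} (hA : A ≠ ⊥)
    (hA1 : A ≤ 1) : IsVFinite A := by
  let s := vop R K '' {F | F ≤ A ∧ F.FG ∧ F ≠ ⊥}
  have hs : ∀ D ∈ s, D ≠ ⊥ ∧ D ≤ 1 ∧ vop R K D = D := by
    rintro _ ⟨F, ⟨hFA, -, hF⟩, rfl⟩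
    exact ⟨ne_bot_of_le_ne_bot hF (le_vop F), vop_le_one (hFA.trans hA1), vop_vop F⟩
  obtain ⟨a, ha, ha0⟩ := Submodule.exists_mem_ne_zero_of_ne_bot hA
  obtain ⟨_, ⟨⟨F, ⟨hFA, hfg, hF⟩, rfl⟩, hmax⟩⟩ :=
    exists_maximal_of_monotone_chain_condition hk.2 hs
      ⟨_, Submodule.span R {a}, ⟨(Submodule.span_singleton_le_iff_mem a A).mpr ha,
        Submodule.fg_span_singleton a, by simpa using ha0⟩, rfl⟩
  have hAF : A ≤ vop R K F := fun x hx => by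
    let F' := F ⊔ Submodule.span R {x}
    have hF' : F' ∈ {F | F ≤ A ∧ F.FG ∧ F ≠ ⊥} :=
      ⟨sup_le hFA ((Submodule.span_singleton_le_iff_mem x A).mpr hx),
        hfg.sup (Submodule.fg_span_singleton x), ne_bot_of_le_ne_bot hF le_sup_left⟩
    exact hmax ⟨F', hF', rfl⟩ (vop_mono le_sup_left)
      (le_vop F' (Submodule.mem_sup_right (Submodule.mem_span_singleton_self x)))
  exact ⟨F, hFA, hfg, hF, le_antisymm (vop_mono hFA) (vop_vop F ▸ vop_mono hAF)⟩

theorem isKrullSub_iff :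
    IsKrullSub R K ↔ CICsub R K ∧ ∀ U : Submodule R K, U ≠ ⊥ → U ≤ 1 → IsVFinite U := by
  refine ⟨fun hk => ⟨hk.1, fun U hU hU1 => hk.isVFinite hU hU1⟩,
    fun ⟨hc, hv⟩ => ⟨hc, fun c hc' hmono => ?_⟩⟩
  obtain ⟨B, hBU, hBfg, -, hvop⟩ :=
    hv _ (ne_bot_of_le_ne_bot (hc' 0).1 (le_iSup c 0)) (iSup_le fun n => (hc' n).2.1)
  obtain ⟨N, hBN⟩ := hBfg.exists_le_of_le_iSup hmono.directed_le hBU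
  refine ⟨N, fun m hm => le_antisymm ?_ (hmono hm)⟩
  calc c m ≤ vop R K (⨆ n, c n) := (le_iSup c m).trans (le_vop _)
    _ = vop R K B := hvop.symm
    _ ≤ vop R K (c N) := vop_mono hBN
    _ = c N := (hc' N).2.2

theorem CICsub.exists_isGVIdeal_le_mul_one_div (hc : CICsub R K)
    (hv : ∀ U : Submodule R K, U ≠ ⊥ → U ≤ 1 → IsVFinite U) {E : Submodule R K} (hE : E ≠ ⊥)
    {a : K} (ha0 : a ≠ 0) (ha : a ∈ 1 / E) : ∃ F, IsGVIdeal F ∧ F ≤ E * (1 / E) := by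
  obtain ⟨F, hFA, hfg, hF, hvop⟩ := hv (E * (1 / E))
    (mul_ne_zero hE (Submodule.ne_bot_iff _ |>.mpr ⟨a, ha, ha0⟩)) Submodule.mul_one_div_le_one
  refine ⟨F, ⟨hfg, hF, ?_⟩, hFA⟩
  rw [← vop_eq_one_iff, hvop, vop_eq_one_iff, hc.one_div_mul_one_div_self hE ha0 ha]

theorem CICsub.isVFinite_of_wStable (hc : CICsub R K) (hs : WStable R K) {U : Submodule R K}
    (hU : U ≠ ⊥) (hU1 : U ≤ 1) : IsVFinite U := by
  have hWW : wop R K U / wop R K U = 1 := hc.div_self (ne_bot_of_le_ne_bot hU (le_wop U))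
    one_ne_zero (Submodule.one_mem_div.mpr (wop_le_one hU1))
  have hWU := hs U hU hU1
  simp only [resid_eq_div, hWW, one_div_wop] at hWU
  exact isVFinite_of_one_le_wop hWU.ge

theorem CICsub.wStable (hc : CICsub R K)
    (hv : ∀ U : Submodule R K, U ≠ ⊥ → U ≤ 1 → IsVFinite U) : WStable R K := by
  intro I hI hI1
  have hWW : wop R K I / wop R K I = 1 := hc.div_self (ne_bot_of_le_ne_bot hI (le_wop I))
    one_ne_zero (Submodule.one_mem_div.mpr (wop_le_one hI1))
  simp only [resid_eq_div, hWW]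
  refine le_antisymm (wop_le_one Submodule.mul_one_div_le_one) (one_le_wop_iff.mpr ?_)
  obtain ⟨F, hF, hFI⟩ :=
    hc.exists_isGVIdeal_le_mul_one_div hv hI one_ne_zero (Submodule.one_mem_div.mpr hI1)
  exact ⟨F, hF, hFI.trans (by rw [one_div_wop]; gcongr; exact le_wop I)⟩

theorem CICsub.isVFinite_of_wDivisorial (hc : CICsub R K) (hd : WDivisorial R K)
    {U : Submodule R K} (hU : U ≠ ⊥) (hU1 : U ≤ 1) : IsVFinite U := by
  have : Nontrivial R := (algebraMap R K).domain_nontrivial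
  have hX1 : U * (1 / U) ≤ 1 := Submodule.mul_one_div_le_one
  have hwv := hd (U * (1 / U)) (ne_bot_of_le_ne_bot hU (Submodule.le_self_mul_one_div hU1))
    ⟨1, one_ne_zero, fun x hx => by simpa using hX1 hx⟩
  have hvX : vop R K (U * (1 / U)) = 1 := vop_eq_one_iff.mpr
    (hc.one_div_mul_one_div_self hU one_ne_zero (Submodule.one_mem_div.mpr hU1))
  rw [hvX] at hwv
  exact isVFinite_of_one_le_wop (hwv.ge.trans (wop_mono (by gcongr; exact le_wop U)))

theorem CICsub.wDivisorial [IsFractionRing R K] (hc : CICsub R K)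
    (hv : ∀ U : Submodule R K, U ≠ ⊥ → U ≤ 1 → IsVFinite U) : WDivisorial R K := by
  rintro J hJ ⟨d, hd0, hd⟩
  refine le_antisymm (wop_le_vop J) ?_
  have ha0 : algebraMap R K d ≠ 0 := (map_ne_zero_iff _ (IsFractionRing.injective R K)).mpr hd0
  obtain ⟨F, hF, hFJ⟩ := hc.exists_isGVIdeal_le_mul_one_div hv hJ ha0 fun x hx => by
    simpa [Algebra.smul_def] using hd x hx
  rw [wop_eq_iSup]
  refine le_iSup_of_le ⟨F, hF⟩ (Submodule.le_div_iff_mul_le.mpr ?_)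
  calc vop R K J * F ≤ vop R K J * (J * (1 / J)) := by gcongr
    _ = J * (vop R K J * (1 / J)) := mul_left_comm _ _ _
    _ ≤ J * 1 := by gcongr; exact Submodule.le_div_iff_mul_le.mp le_rfl
    _ = J := mul_one J

end WOperation

theorem statement_15_general {R K : Type*} [CommRing R] [Field K] [Algebra R K]
    [IsFractionRing R K] :
    ((CICsub R K ∧ WStable R K) ↔ IsKrullSub R K) ∧
    ((CICsub R K ∧ WDivisorial R K) ↔ IsKrullSub R K) := by
  rw [isKrullSub_iff]
  exact ⟨⟨fun ⟨hc, hs⟩ => ⟨hc, fun _ hU hU1 => hc.isVFinite_of_wStable hs hU hU1⟩,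
      fun ⟨hc, hv⟩ => ⟨hc, hc.wStable hv⟩⟩,
    ⟨fun ⟨hc, hd⟩ => ⟨hc, fun _ hU hU1 => hc.isVFinite_of_wDivisorial hd hU hU1⟩,
      fun ⟨hc, hv⟩ => ⟨hc, hc.wDivisorial hv⟩⟩⟩

/-- `R` is completely integrally closed and `w`-stable iff `R` is
a Krull domain; equivalently, `R` is completely integrally closed and
`w`-divisorial iff `R` is a Krull domain. -/
theorem statement_15 {R K : Type*} [CommRing R] [IsDomain R] [Field K] [Algebra R K]
    [IsFractionRing R K] :
    ((CICsub R K ∧ WStable R K) ↔ IsKrullSub R K) ∧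
    ((CICsub R K ∧ WDivisorial R K) ↔ IsKrullSub R K) :=
  statement_15_general
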